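/- Let p ∈ ℕ, let Γ = {0,1}^p, let π : Γ → (0,∞) with Σ_{γ∈Γ} π(γ) = 1, let S : Γ → (0,∞), and let w_A, w_R, w_S : {0,…,p} → [0,1] satisfy w_A(k) + w_R(k) + w_S(k) = 1 for all k. Define T_m and the off-diagonal pRNS transition probabilities A(γ, γ′) for γ ≠ γ′ as in the pRNS sampler, and set K(γ, γ′) = A(γ, γ′) for γ′ ≠ γ and K(γ, γ) = 1 − Σ_{γ′≠γ} A(γ, γ′). Then K(γ, γ) ≥ 0 for every γ, each K(γ, ·) is a probability mass function on Γ, and π is invariant for K, i.e. Σ_{γ∈Γ} π(γ) K(γ, γ′) = π(γ′) for every γ′ ∈ Γ. -/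

import Mathlib

/-- The three move types of the pRNS sampler. -/
inductive Move
  | A | R | S
deriving DecidableEq

instance : Fintype Move :=
  ⟨{Move.A, Move.R, Move.S}, fun m => by cases m <;> simp⟩

/-- The paired backward move: `A′ = R`, `R′ = A`, `S′ = S`. -/
def Move.pair : Move → Move
  | .A => .R
  | .R => .A
  | .S => .S

/-- The size `|γ|` of an inclusion vector: the number of active coordinates. -/
def gsize {p : ℕ} (γ : Fin p → Bool) : ℕ :=
  (Finset.univ.filter fun i => γ i = true).card

open Classical in
/-- The add, remove and swap neighborhoods `N_m(γ)`. -/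
noncomputable def Nmove {p : ℕ} : Move → (Fin p → Bool) → Finset (Fin p → Bool)
  | .A, γ => Finset.univ.filter fun γ' => ∃ j, γ j = false ∧ γ' = Function.update γ j true
  | .R, γ => Finset.univ.filter fun γ' => ∃ j, γ j = true ∧ γ' = Function.update γ j false
  | .S, γ => Finset.univ.filter fun γ' => ∃ j k, γ j = true ∧ γ k = false ∧
      γ' = Function.update (Function.update γ j false) k true

open Classical in
/-- The pRNS proposal transition function restricted to `N_m(γ)`:
`T_m(γ, γ′) = S(γ′)/Σ_{γ̃∈N_m(γ)} S(γ̃)` for `γ′ ∈ N_m(γ)` and `0` otherwise. -/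
noncomputable def Tmove {p : ℕ} (S : (Fin p → Bool) → ℝ) (m : Move)
    (γ γ' : Fin p → Bool) : ℝ :=
  if γ' ∈ Nmove m γ then S γ' / ∑ x ∈ Nmove m γ, S x else 0

open Classical in
/-- The off-diagonal pRNS transition probability `A(γ, γ′)` for `γ ≠ γ′`. -/
noncomputable def Atrans {p : ℕ} (pr S : (Fin p → Bool) → ℝ) (w : Move → ℕ → ℝ)
    (γ γ' : Fin p → Bool) : ℝ :=
  ∑ m : Move,
    if γ' ∈ Nmove m γ ∧ 0 < w m (gsize γ) then
      w m (gsize γ) * Tmove S m γ γ' *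
        min 1 (pr γ' * (w m.pair (gsize γ') * Tmove S m.pair γ' γ) /
               (pr γ * (w m (gsize γ) * Tmove S m γ γ')))
    else 0

open Classical in
/-- The pRNS transition kernel: off-diagonal entries `A(γ, γ′)`, diagonal entry
`1 − Σ_{γ′ ≠ γ} A(γ, γ′)`. -/
noncomputable def Ktrans {p : ℕ} (pr S : (Fin p → Bool) → ℝ) (w : Move → ℕ → ℝ)
    (γ γ' : Fin p → Bool) : ℝ :=
  if γ' = γ then 1 - ∑ x ∈ Finset.univ.erase γ, Atrans pr S w γ x
  else Atrans pr S w γ γ'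

/-!
pRNS is a Metropolis–Hastings sampler: `π(γ)` times the move-`m` part of `A(γ, γ′)` is
`min (π(γ) w_m T_m(γ, γ′)) (π(γ′) w_{m′} T_{m′}(γ′, γ))`, which is symmetric under the
involution `(m, γ, γ′) ↦ (m′, γ′, γ)`; summing over `m` gives detailed balance
`π(γ) A(γ, γ′) = π(γ′) A(γ′, γ)`. Keeping the rejected mass on the diagonal then makes `π`
invariant, and the diagonal is nonnegative because the off-diagonal mass of a row is at most
`Σ_m w_m · Σ_{γ′} T_m(γ, γ′) ≤ Σ_m w_m = 1`.
-/

open Finset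

section HoldingKernel

variable {α : Type*} [Fintype α] [DecidableEq α]

def holdingKernel (A : α → α → ℝ) (x y : α) : ℝ :=
  if y = x then 1 - ∑ z ∈ univ.erase x, A x z else A x y

lemma holdingKernel_self (A : α → α → ℝ) (x : α) :
    holdingKernel A x x = 1 - ∑ z ∈ univ.erase x, A x z :=
  if_pos rfl

lemma holdingKernel_of_ne (A : α → α → ℝ) {x y : α} (h : y ≠ x) :
    holdingKernel A x y = A x y :=
  if_neg h

lemma holdingKernel_nonneg {A : α → α → ℝ} (hA : ∀ x y, 0 ≤ A x y)
    (hrow : ∀ x, ∑ y, A x y ≤ 1) (x y : α) : 0 ≤ holdingKernel A x y := by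
  obtain rfl | h := eq_or_ne y x
  · have := sum_erase_add univ (A y) (mem_univ y)
    linarith [holdingKernel_self A y, hA y y, hrow y]
  · exact holdingKernel_of_ne A h ▸ hA x y

lemma sum_holdingKernel (A : α → α → ℝ) (x : α) : ∑ y, holdingKernel A x y = 1 := by
  rw [← add_sum_erase _ _ (mem_univ x), holdingKernel_self,
    sum_congr rfl fun y hy => holdingKernel_of_ne A (ne_of_mem_erase hy), sub_add_cancel]

lemma sum_mul_holdingKernel {π : α → ℝ} {A : α → α → ℝ}
    (hbal : ∀ x y, π x * A x y = π y * A y x) (y : α) :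
    ∑ x, π x * holdingKernel A x y = π y := by
  rw [← add_sum_erase _ _ (mem_univ y), holdingKernel_self,
    sum_congr rfl fun x hx => (by rw [holdingKernel_of_ne A (ne_of_mem_erase hx).symm, hbal] :
      π x * holdingKernel A x y = π y * A y x),
    ← mul_sum, mul_sub, mul_one, sub_add_cancel]

end HoldingKernel

lemma Move.pair_involutive : Function.Involutive Move.pair := by
  intro m; cases m <;> rfl

lemma Move.sum_univ {M : Type*} [AddCommMonoid M] (f : Move → M) :
    ∑ m, f m = f .A + f .R + f .S := by
  rw [show (univ : Finset Move) = {.A, .R, .S} from rfl, sum_insert (by decide),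
    sum_insert (by decide), sum_singleton, add_assoc]

section Proposal

variable {p : ℕ} {S : (Fin p → Bool) → ℝ}

lemma Tmove_nonneg (hS : ∀ γ, 0 ≤ S γ) (m : Move) (γ γ' : Fin p → Bool) :
    0 ≤ Tmove S m γ γ' := by
  unfold Tmove
  split_ifs
  exacts [div_nonneg (hS γ') (sum_nonneg fun x _ => hS x), le_rfl]

lemma Tmove_pos (hS : ∀ γ, 0 < S γ) {m : Move} {γ γ' : Fin p → Bool}
    (h : γ' ∈ Nmove m γ) : 0 < Tmove S m γ γ' := by
  rw [Tmove, if_pos h]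
  exact div_pos (hS γ') (sum_pos (fun x _ => hS x) ⟨γ', h⟩)

lemma Tmove_eq_zero_of_notMem {m : Move} {γ γ' : Fin p → Bool} (h : γ' ∉ Nmove m γ) :
    Tmove S m γ γ' = 0 :=
  if_neg h

lemma sum_Tmove_le_one (hS : ∀ γ, 0 ≤ S γ) (m : Move) (γ : Fin p → Bool) :
    ∑ γ', Tmove S m γ γ' ≤ 1 := by
  simp only [Tmove]
  rw [sum_ite_mem, univ_inter, ← sum_div]
  exact div_le_one_of_le₀ le_rfl (sum_nonneg fun x _ => hS x)

end Proposal

lemma mul_min_one_div {a b : ℝ} (ha : 0 < a) : a * min 1 (b / a) = min a b := by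
  rw [mul_min_of_nonneg _ _ ha.le, mul_one, mul_div_cancel₀ b ha.ne']

section Acceptance

variable {p : ℕ} (pr S : (Fin p → Bool) → ℝ) (w : Move → ℕ → ℝ)

noncomputable def proposalFlow (m : Move) (γ γ' : Fin p → Bool) : ℝ :=
  pr γ * (w m (gsize γ) * Tmove S m γ γ')

noncomputable def Amove (m : Move) (γ γ' : Fin p → Bool) : ℝ :=
  if γ' ∈ Nmove m γ ∧ 0 < w m (gsize γ) then
    w m (gsize γ) * Tmove S m γ γ' *
      min 1 (proposalFlow pr S w m.pair γ' γ / proposalFlow pr S w m γ γ')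
  else 0

lemma Atrans_eq_sum_Amove (γ γ' : Fin p → Bool) :
    Atrans pr S w γ γ' = ∑ m, Amove pr S w m γ γ' :=
  rfl

variable {pr S w}

lemma proposalFlow_nonneg (hpr : ∀ γ, 0 ≤ pr γ) (hS : ∀ γ, 0 ≤ S γ) (hw : ∀ m k, 0 ≤ w m k)
    (m : Move) (γ γ' : Fin p → Bool) : 0 ≤ proposalFlow pr S w m γ γ' :=
  mul_nonneg (hpr γ) (mul_nonneg (hw _ _) (Tmove_nonneg hS m γ γ'))

lemma proposalFlow_pos_iff (hpr : ∀ γ, 0 < pr γ) (hS : ∀ γ, 0 < S γ) (hw : ∀ m k, 0 ≤ w m k)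
    {m : Move} {γ γ' : Fin p → Bool} :
    0 < proposalFlow pr S w m γ γ' ↔ γ' ∈ Nmove m γ ∧ 0 < w m (gsize γ) := by
  refine ⟨fun h => ⟨?_, ?_⟩, fun ⟨hN, hw⟩ => mul_pos (hpr γ) (mul_pos hw (Tmove_pos hS hN))⟩
  · by_contra hN
    simp [proposalFlow, Tmove_eq_zero_of_notMem hN] at h
  · refine (hw m _).lt_of_ne fun h0 => ?_
    simp [proposalFlow, ← h0] at h

lemma mul_Amove (hpr : ∀ γ, 0 < pr γ) (hS : ∀ γ, 0 < S γ) (hw : ∀ m k, 0 ≤ w m k)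
    (m : Move) (γ γ' : Fin p → Bool) :
    pr γ * Amove pr S w m γ γ' =
      min (proposalFlow pr S w m γ γ') (proposalFlow pr S w m.pair γ' γ) := by
  have hflow := proposalFlow_nonneg (fun γ => (hpr γ).le) (fun γ => (hS γ).le) hw (pr := pr)
  rw [Amove]
  split_ifs with h
  · rw [← mul_min_one_div ((proposalFlow_pos_iff hpr hS hw).2 h), ← mul_assoc]
    rfl
  · have h0 : proposalFlow pr S w m γ γ' = 0 :=
      (hflow m γ γ').antisymm' (not_lt.1 (mt (proposalFlow_pos_iff hpr hS hw).1 h))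
    rw [h0, mul_zero, min_eq_left (hflow _ _ _)]

end Acceptance

section Transition

variable {p : ℕ} {pr S : (Fin p → Bool) → ℝ} {w : Move → ℕ → ℝ}

lemma Amove_le (hS : ∀ γ, 0 ≤ S γ) (hw : ∀ m k, 0 ≤ w m k) (m : Move) (γ γ' : Fin p → Bool) :
    Amove pr S w m γ γ' ≤ w m (gsize γ) * Tmove S m γ γ' := by
  have hwT := mul_nonneg (hw m (gsize γ)) (Tmove_nonneg hS m γ γ')
  unfold Amove
  split_ifs
  exacts [mul_le_of_le_one_right hwT (min_le_left _ _), hwT]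

lemma Amove_nonneg (hpr : ∀ γ, 0 < pr γ) (hS : ∀ γ, 0 < S γ) (hw : ∀ m k, 0 ≤ w m k)
    (m : Move) (γ γ' : Fin p → Bool) : 0 ≤ Amove pr S w m γ γ' := by
  have hflow := proposalFlow_nonneg (fun γ => (hpr γ).le) (fun γ => (hS γ).le) hw (pr := pr)
  refine nonneg_of_mul_nonneg_right ?_ (hpr γ)
  rw [mul_Amove hpr hS hw]
  exact le_min (hflow _ _ _) (hflow _ _ _)

lemma Atrans_nonneg (hpr : ∀ γ, 0 < pr γ) (hS : ∀ γ, 0 < S γ) (hw : ∀ m k, 0 ≤ w m k)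
    (γ γ' : Fin p → Bool) : 0 ≤ Atrans pr S w γ γ' :=
  sum_nonneg fun m _ => Amove_nonneg hpr hS hw m γ γ'

lemma sum_Atrans_le_one (hS : ∀ γ, 0 ≤ S γ) (hw : ∀ m k, 0 ≤ w m k)
    (hwsum : ∀ k, w Move.A k + w Move.R k + w Move.S k = 1) (γ : Fin p → Bool) :
    ∑ γ', Atrans pr S w γ γ' ≤ 1 :=
  calc ∑ γ', Atrans pr S w γ γ' = ∑ m, ∑ γ', Amove pr S w m γ γ' := by
        simp only [Atrans_eq_sum_Amove]
        exact sum_comm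
    _ ≤ ∑ m, w m (gsize γ) * ∑ γ', Tmove S m γ γ' := by
        gcongr with m
        rw [mul_sum]
        exact sum_le_sum fun γ' _ => Amove_le hS hw m γ γ'
    _ ≤ ∑ m, w m (gsize γ) := by
        gcongr with m
        exact mul_le_of_le_one_right (hw _ _) (sum_Tmove_le_one hS m γ)
    _ = 1 := by rw [Move.sum_univ]; exact hwsum _

lemma Atrans_detailed_balance (hpr : ∀ γ, 0 < pr γ) (hS : ∀ γ, 0 < S γ)
    (hw : ∀ m k, 0 ≤ w m k) (γ γ' : Fin p → Bool) :
    pr γ * Atrans pr S w γ γ' = pr γ' * Atrans pr S w γ' γ := by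
  simp only [Atrans_eq_sum_Amove, mul_sum, mul_Amove hpr hS hw]
  exact Fintype.sum_equiv (Move.pair_involutive.toPerm _) _ _ fun m => by
    simp [Move.pair_involutive m, min_comm]

end Transition

theorem pRNS_invariance_general {p : ℕ} (pr S : (Fin p → Bool) → ℝ)
    (hpr : ∀ γ, 0 < pr γ)
    (hS : ∀ γ, 0 < S γ)
    (w : Move → ℕ → ℝ) (hw0 : ∀ m k, 0 ≤ w m k)
    (hwsum : ∀ k, w Move.A k + w Move.R k + w Move.S k = 1) :
    (∀ γ : Fin p → Bool, 0 ≤ Ktrans pr S w γ γ) ∧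
    (∀ γ : Fin p → Bool, (∀ γ', 0 ≤ Ktrans pr S w γ γ') ∧
      ∑ γ' : Fin p → Bool, Ktrans pr S w γ γ' = 1) ∧
    (∀ γ' : Fin p → Bool, ∑ γ : Fin p → Bool, pr γ * Ktrans pr S w γ γ' = pr γ') := by
  have hK : Ktrans pr S w = holdingKernel (Atrans pr S w) := rfl
  have hnonneg := holdingKernel_nonneg (Atrans_nonneg hpr hS hw0)
    (sum_Atrans_le_one (fun γ => (hS γ).le) hw0 hwsum)
  rw [hK]
  exact ⟨fun γ => hnonneg γ γ, fun γ => ⟨hnonneg γ, sum_holdingKernel _ γ⟩,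
    sum_mul_holdingKernel (Atrans_detailed_balance hpr hS hw0)⟩

/-- Lemma 1 (invariance): the pRNS transition kernel `K` has nonnegative diagonal,
each row `K(γ, ·)` is a probability mass function, and the target `π` is invariant:
`Σ_γ π(γ) K(γ, γ′) = π(γ′)` for every `γ′`. -/
theorem pRNS_invariance {p : ℕ} (pr S : (Fin p → Bool) → ℝ)
    (hpr : ∀ γ, 0 < pr γ) (hprsum : ∑ γ : Fin p → Bool, pr γ = 1)
    (hS : ∀ γ, 0 < S γ)
    (w : Move → ℕ → ℝ) (hw0 : ∀ m k, 0 ≤ w m k) (hw1 : ∀ m k, w m k ≤ 1)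
    (hwsum : ∀ k, w Move.A k + w Move.R k + w Move.S k = 1) :
    (∀ γ : Fin p → Bool, 0 ≤ Ktrans pr S w γ γ) ∧
    (∀ γ : Fin p → Bool, (∀ γ', 0 ≤ Ktrans pr S w γ γ') ∧
      ∑ γ' : Fin p → Bool, Ktrans pr S w γ γ' = 1) ∧
    (∀ γ' : Fin p → Bool, ∑ γ : Fin p → Bool, pr γ * Ktrans pr S w γ γ' = pr γ') :=
  pRNS_invariance_general pr S hpr hS w hw0 hwsum
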